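/- arXiv:1907.11590 — 2 statements merged into one kernel-verified Lean document; each statement's English description precedes it below -/
import Mathlib

section
/- Let G be a finite connected simple graph with minimum degree δ(G) = 2, satisfying γ_t(G) = 2μ*(G), that is not isomorphic to any graph in K nor to C_6. Then the edge set M(G) — defined as the set of edges uv for which there exist x ∈ N(u) of degree two and y ∈ N(v) of degree two such that the edges xu, uv, vy lie on a common induced 6-cycle of G — is a maximal matching of G, it satisfies: (i) for every vertex v covered by M(G), its partner is the unique neighbor of v among the covered vertices; (ii) for every two distinct covered vertices u, v sharing a common neighbor, there exists a vertex whose neighborhood is exactly the pair of their partners; and moreover M(G) is the unique maximal matching of G satisfying (i) and (ii). -/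
/-!
Let `M` be a minimum maximal matching. An uncovered vertex has all of its (at least two)
neighbours in `V(M)`, so `V(M)` is a total dominating set with `2μ*(G) = γ_t(G)` elements, i.e.
a smallest one. Every local modification of `V(M)` that would still dominate but be smaller is
therefore excluded; this gives (i) and (ii) for `M`, and it forces every vertex of an induced
6-cycle through an edge of `𝓜(G)` with an uncovered end to have degree two, which makes `G` a
6-cycle. Hence `𝓜(G) ⊆ M`.

Conversely, let `M` be any maximal matching with (i) and (ii), and `uv ∈ M`. If `u` has an
(uncovered) neighbour `x ≠ v` with a neighbour `a ∉ {u, v}`, then two applications of (ii) give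
vertices `z, z'` with `N(z) = {v, M_p a}` and `N(z') = {u, a}`, and `z' u v z (M_p a) a` is an
induced 6-cycle witnessing `uv ∈ 𝓜(G)`. If neither end has such a neighbour, `G ∈ 𝒦`. So
`M ⊆ 𝓜(G)`, and maximality of `M` turns this into equality.
-/

open SimpleGraph

namespace TotalDomMM

variable {V : Type*}

/-- `M` is a maximal matching of `G`: a matching not contained in a larger matching. -/
def IsMaximalMatching (G : SimpleGraph V) (M : G.Subgraph) : Prop :=
  M.IsMatching ∧
    ∀ M' : G.Subgraph, M'.IsMatching → M.edgeSet ⊆ M'.edgeSet → M.edgeSet = M'.edgeSet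

/-- `μ*(G)`: the minimum cardinality of a maximal matching of `G`. -/
noncomputable def muStar (G : SimpleGraph V) : ℕ :=
  sInf {n | ∃ M : G.Subgraph, IsMaximalMatching G M ∧ M.edgeSet.ncard = n}

/-- `S` is a total dominating set of `G`: every vertex has a neighbor in `S`. -/
def IsTotalDomSet (G : SimpleGraph V) (S : Set V) : Prop :=
  ∀ v : V, ∃ u ∈ S, G.Adj v u

/-- `γ_t(G)`: the minimum cardinality of a total dominating set of `G`. -/
noncomputable def gammaT (G : SimpleGraph V) : ℕ :=
  sInf {n | ∃ S : Set V, IsTotalDomSet G S ∧ S.ncard = n}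

/-- `δ(G)`: the minimum degree of `G`. -/
noncomputable def minDeg (G : SimpleGraph V) : ℕ :=
  sInf {k | ∃ v : V, (G.neighborSet v).ncard = k}

/-- `G` has no isolated vertices. -/
def NoIsolated (G : SimpleGraph V) : Prop := ∀ v : V, ∃ u : V, G.Adj v u

/-- `sup(G)`: the set of support vertices, i.e. vertices adjacent to a leaf
(a vertex of degree one). -/
def supSet (G : SimpleGraph V) : Set V :=
  {v | ∃ u, G.Adj v u ∧ (G.neighborSet u).ncard = 1}

/-- `S⁺(G)`: support vertices adjacent to some support vertex. -/
def supPlus (G : SimpleGraph V) : Set V :=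
  {v ∈ supSet G | ∃ u ∈ supSet G, G.Adj v u}

/-- `S⁻(G) = sup(G) \ S⁺(G)`. -/
def supMinus (G : SimpleGraph V) : Set V := supSet G \ supPlus G

/-- The set of vertices covered by a set of edges. -/
def edgeVerts (E : Set (Sym2 V)) : Set V := {v | ∃ e ∈ E, v ∈ e}

/-- Conditions (i)-(ii) (minimum degree two case) for a matching `M`:
(i) for every `v ∈ V(M)`, its partner `M_p v` is the unique neighbor of `v` in `V(M)`;
(ii) distinct `u, v ∈ V(M)` with a common neighbor force a vertex whose neighborhood is
exactly `{M_p u, M_p v}`. -/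
def MatchingCond (G : SimpleGraph V) (M : G.Subgraph) : Prop :=
  (∀ v ∈ M.verts, ∀ w, M.Adj v w → ∀ u ∈ M.verts, G.Adj v u → u = w) ∧
  (∀ u v : V, u ∈ M.verts → v ∈ M.verts → u ≠ v →
    (∃ w, G.Adj u w ∧ G.Adj v w) →
    ∀ u' v' : V, M.Adj u u' → M.Adj v v' → ∃ x : V, G.neighborSet x = {u', v'})

/-- The matching `M` is partitioned as `M = M⁺ ∪ M⁻ ∪ M*` satisfying conditions (i)-(iv)
of the main theorem:
(i) `M⁺` is a perfect matching of the subgraph induced by `S⁺(G)`;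
(ii) `S⁻(G) ⊆ V(M⁻)` and every edge of `M⁻` joins a vertex of `S⁻(G)` with a vertex of
`V(G) \ sup(G)`;
(iii) for `v ∈ S⁻(G) ∪ V(M*)`, the partner `M_p v` is the unique neighbor of `v` in `V(M)`;
(iv) for distinct `u, v ∈ S⁻(G) ∪ V(M*)` with a common neighbor, some vertex has
neighborhood exactly `{M_p u, M_p v}`. -/
def PartitionCond (G : SimpleGraph V) (M : G.Subgraph) (Mp Mm Ms : Set (Sym2 V)) : Prop :=
  Mp ∪ Mm ∪ Ms = M.edgeSet ∧
  Disjoint Mp Mm ∧ Disjoint Mp Ms ∧ Disjoint Mm Ms ∧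
  -- (i)
  (∀ u v : V, s(u, v) ∈ Mp → u ∈ supPlus G) ∧
  supPlus G ⊆ edgeVerts Mp ∧
  -- (ii)
  supMinus G ⊆ edgeVerts Mm ∧
  (∀ u v : V, s(u, v) ∈ Mm →
    (u ∈ supMinus G ∧ v ∉ supSet G) ∨ (v ∈ supMinus G ∧ u ∉ supSet G)) ∧
  -- (iii)
  (∀ v ∈ supMinus G ∪ edgeVerts Ms, ∀ w, M.Adj v w → ∀ u ∈ M.verts, G.Adj v u → u = w) ∧
  -- (iv)
  (∀ u v : V, u ∈ supMinus G ∪ edgeVerts Ms → v ∈ supMinus G ∪ edgeVerts Ms → u ≠ v →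
    (∃ w, G.Adj u w ∧ G.Adj v w) →
    ∀ u' v' : V, M.Adj u u' → M.Adj v v' → ∃ x : V, G.neighborSet x = {u', v'})

/-- The graph with vertices `u, v, w_1, …, w_n` (here `u = Sum.inr 0`, `v = Sum.inr 1`,
`w_i = Sum.inl i`) and edges `uv` and `uw_i, vw_i` for all `i`: `n` triangles sharing
the common edge `uv`. -/
def kGraph (n : ℕ) : SimpleGraph (Fin n ⊕ Fin 2) :=
  SimpleGraph.fromRel (fun a b => ¬(a.isLeft = true ∧ b.isLeft = true))

/-- `G` belongs to the family `𝒦` of graphs consisting of triangles sharing a common edge. -/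
def InK (G : SimpleGraph V) : Prop := ∃ n : ℕ, 1 ≤ n ∧ Nonempty (G ≃g kGraph n)

/-- `G` is a 6-cycle. -/
def IsC6 (G : SimpleGraph V) : Prop := Nonempty (G ≃g SimpleGraph.cycleGraph 6)

/-- `a, b, c, d, e, f` (in this cyclic order) form an induced 6-cycle in `G`. -/
def IsInducedC6 (G : SimpleGraph V) (a b c d e f : V) : Prop :=
  List.Pairwise (· ≠ ·) [a, b, c, d, e, f] ∧
  G.Adj a b ∧ G.Adj b c ∧ G.Adj c d ∧ G.Adj d e ∧ G.Adj e f ∧ G.Adj f a ∧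
  ¬G.Adj a c ∧ ¬G.Adj a d ∧ ¬G.Adj a e ∧
  ¬G.Adj b d ∧ ¬G.Adj b e ∧ ¬G.Adj b f ∧
  ¬G.Adj c e ∧ ¬G.Adj c f ∧ ¬G.Adj d f

/-- `d₂(G)`: the set of vertices of degree two. -/
def d2 (G : SimpleGraph V) : Set V := {v | (G.neighborSet v).ncard = 2}

/-- `𝓜(G)`: the set of edges `uv` such that there are `x ∈ N(u) ∩ d₂(G)` and
`y ∈ N(v) ∩ d₂(G)` so that the edges `xu, uv, vy` lie on a common induced 6-cycle of `G`. -/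
def mSet (G : SimpleGraph V) : Set (Sym2 V) :=
  {e | ∃ u v x y w t : V, e = s(u, v) ∧
    x ∈ G.neighborSet u ∩ d2 G ∧ y ∈ G.neighborSet v ∩ d2 G ∧
    IsInducedC6 G x u v y w t}

end TotalDomMM

namespace SimpleGraph

variable {V : Type*} {G : SimpleGraph V}

theorem Subgraph.IsMatching.ncard_verts [Finite V] {M : G.Subgraph} (h : M.IsMatching) :
    M.verts.ncard = 2 * M.edgeSet.ncard := by
  classical
  have := Fintype.ofFinite V
  have key : Fintype.card M.verts = 2 * M.coe.edgeFinset.card := by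
    rw [← M.coe.sum_degrees_eq_twice_card_edges, Fintype.card_eq_sum_ones]
    refine Finset.sum_congr rfl fun v _ => ?_
    rw [Subgraph.coe_degree]
    convert ((Subgraph.isMatching_iff_forall_degree.1 h) v v.2).symm
  rw [Set.ncard_eq_toFinset_card', Set.toFinset_card, key, ← Subgraph.image_coe_edgeSet_coe,
    Set.ncard_image_of_injective _ (Sym2.map.injective Subtype.val_injective),
    Set.ncard_eq_toFinset_card', ← SimpleGraph.edgeFinset]

theorem Preconnected.nonempty_iso_of_neighborSet_eq_image {α : Type*} [Nonempty α]
    {H : SimpleGraph α} (hG : G.Preconnected) {f : α → V} (hf : Function.Injective f)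
    (hN : ∀ a, G.neighborSet (f a) = f '' H.neighborSet a) : Nonempty (H ≃g G) := by
  have hclosed : ∀ p q, G.Walk p q → p ∈ Set.range f → q ∈ Set.range f := by
    intro p q w
    induction w with
    | nil => exact id
    | cons h _ ih =>
      rintro ⟨a, rfl⟩
      have hq : _ ∈ G.neighborSet (f a) := h
      exact ih (Set.image_subset_range _ _ (hN a ▸ hq))
  obtain ⟨a₀⟩ := ‹Nonempty α›
  have hsurj : Function.Surjective f := fun p =>
    hclosed _ _ (hG (f a₀) p).some ⟨a₀, rfl⟩
  refine ⟨⟨Equiv.ofBijective f ⟨hf, hsurj⟩, fun {a b} => ?_⟩⟩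
  change f b ∈ G.neighborSet (f a) ↔ b ∈ H.neighborSet a
  rw [hN, hf.mem_set_image]

end SimpleGraph

namespace TotalDomMM

variable {V : Type*} {G : SimpleGraph V} {M : G.Subgraph} {a b x u v y w t : V}

lemma IsMaximalMatching.mem_verts_of_adj (hM : IsMaximalMatching G M) (ha : a ∉ M.verts)
    (hab : G.Adj a b) : b ∈ M.verts := by
  by_contra hb
  have hdisj : Disjoint M.support (G.subgraphOfAdj hab).support := by
    rw [hM.1.support_eq_verts, (Subgraph.IsMatching.subgraphOfAdj hab).support_eq_verts,
      subgraphOfAdj_verts, Set.disjoint_right]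
    rintro x (rfl | rfl) <;> assumption
  have hsup := hM.2 _ (hM.1.sup (.subgraphOfAdj hab) hdisj) (by simp [Subgraph.edgeSet_sup])
  have hab' : s(a, b) ∈ M.edgeSet := by rw [hsup, Subgraph.edgeSet_sup]; simp
  exact ha (M.edge_vert hab')

lemma exists_isMaximalMatching [Finite V] (G : SimpleGraph V) :
    ∃ M : G.Subgraph, IsMaximalMatching G M := by
  obtain ⟨M, hM, hmax⟩ := Set.Finite.exists_maximalFor Subgraph.edgeSet
    {M : G.Subgraph | M.IsMatching} (Set.toFinite _) ⟨⊥, fun v hv => hv.elim⟩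
  exact ⟨M, hM, fun M' hM' hle => hle.antisymm (hmax hM' hle)⟩

lemma exists_isMaximalMatching_ncard_eq_muStar [Finite V] (G : SimpleGraph V) :
    ∃ M : G.Subgraph, IsMaximalMatching G M ∧ M.edgeSet.ncard = muStar G := by
  obtain ⟨M, hM⟩ := exists_isMaximalMatching G
  exact Nat.sInf_mem (s := {n | ∃ M : G.Subgraph, IsMaximalMatching G M ∧ M.edgeSet.ncard = n})
    ⟨_, M, hM, rfl⟩

lemma gammaT_le_ncard {S : Set V} (hS : IsTotalDomSet G S) : gammaT G ≤ S.ncard :=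
  Nat.sInf_le ⟨S, hS, rfl⟩

lemma minDeg_le_ncard_neighborSet (v : V) : minDeg G ≤ (G.neighborSet v).ncard :=
  Nat.sInf_le ⟨v, rfl⟩

lemma IsMaximalMatching.isTotalDomSet (hM : IsMaximalMatching G M) {R S : Set V}
    (hRS : M.verts \ R ⊆ S) (hcov : ∀ p q, M.Adj p q → q ∈ R → ∃ s ∈ S, G.Adj p s)
    (hunc : ∀ p ∉ M.verts, G.neighborSet p ⊆ R → ∃ s ∈ S, G.Adj p s) :
    IsTotalDomSet G S := by
  intro p
  by_cases hp : p ∈ M.verts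
  · obtain ⟨q, hpq, -⟩ := hM.1 hp
    by_cases hq : q ∈ R
    · exact hcov p q hpq hq
    · exact ⟨q, hRS ⟨hpq.snd_mem, hq⟩, hpq.adj_sub⟩
  · by_cases hN : G.neighborSet p ⊆ R
    · exact hunc p hp hN
    · obtain ⟨q, hpq, hq⟩ := Set.not_subset.1 hN
      exact ⟨q, hRS ⟨hM.mem_verts_of_adj hp hpq, hq⟩, hpq⟩

lemma ncard_insert_diff_pair_lt [Finite V] {A : Set V} (c : V) (ha : a ∈ A) (hb : b ∈ A)
    (hab : a ≠ b) : (insert c (A \ {a, b})).ncard < A.ncard := by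
  have hsub : {a, b} ⊆ A := Set.insert_subset ha (Set.singleton_subset_iff.2 hb)
  have h2 : 2 ≤ A.ncard := Set.ncard_pair hab ▸ Set.ncard_le_ncard hsub
  have := Set.ncard_insert_le c (A \ {a, b})
  rw [Set.ncard_sdiff hsub, Set.ncard_pair hab] at this
  omega

lemma neighborSet_eq_pair_of_subset [Finite V] {p : V} (hp : 2 ≤ (G.neighborSet p).ncard)
    (hsub : G.neighborSet p ⊆ {a, b}) (hab : a ≠ b) : G.neighborSet p = {a, b} :=
  Set.eq_of_subset_of_ncard_le hsub (Set.ncard_pair hab ▸ hp)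

lemma pairwise_ne_six_iff {c d e f : V} :
    [a, b, c, d, e, f].Pairwise (· ≠ ·) ↔
      (a ≠ b ∧ a ≠ c ∧ a ≠ d ∧ a ≠ e ∧ a ≠ f) ∧ (b ≠ c ∧ b ≠ d ∧ b ≠ e ∧ b ≠ f) ∧
        (c ≠ d ∧ c ≠ e ∧ c ≠ f) ∧ (d ≠ e ∧ d ≠ f) ∧ e ≠ f := by
  simp [List.pairwise_cons]

lemma neighborSet_eq_pair_of_mem_d2 [Finite V] {p : V} (hp : p ∈ d2 G) (ha : G.Adj p a)
    (hb : G.Adj p b) (hab : a ≠ b) : G.neighborSet p = {a, b} :=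
  (Set.eq_of_subset_of_ncard_le
    (show {a, b} ⊆ G.neighborSet p from Set.insert_subset ha (Set.singleton_subset_iff.2 hb))
    (by rw [hp, Set.ncard_pair hab])).symm

structure IsTightMatching (G : SimpleGraph V) (M : G.Subgraph) : Prop where
  isMaximalMatching : IsMaximalMatching G M
  ncard_verts_le : ∀ S, IsTotalDomSet G S → M.verts.ncard ≤ S.ncard

lemma isTightMatching_of_gammaT_eq [Finite V] (heq : gammaT G = 2 * muStar G)
    (hM : IsMaximalMatching G M) (hmu : M.edgeSet.ncard = muStar G) : IsTightMatching G M :=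
  ⟨hM, fun _ hS => hM.1.ncard_verts ▸ hmu ▸ heq ▸ gammaT_le_ncard hS⟩

namespace IsTightMatching

variable [Finite V]

/-- Otherwise `V(M) \ {w}` still dominates: `w` is needed only for `v`, which also sees `u`. -/
lemma eq_of_adj (hM : IsTightMatching G M) (hδ : ∀ v, 2 ≤ (G.neighborSet v).ncard)
    (hvw : M.Adj v w) (hu : u ∈ M.verts) (hvu : G.Adj v u) : u = w := by
  by_contra hne
  have hS : IsTotalDomSet G (M.verts \ {w}) := by
    refine hM.isMaximalMatching.isTotalDomSet subset_rfl (fun p q hpq hq => ?_) fun p _ hp => ?_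
    · rw [Set.mem_singleton_iff] at hq
      subst hq
      exact ⟨u, ⟨hu, hne⟩, hM.1.1.eq_of_adj_right hpq hvw ▸ hvu⟩
    · have := (Set.ncard_le_ncard hp).trans_eq (Set.ncard_singleton w)
      have := hδ p
      omega
  exact (hM.ncard_verts_le _ hS).not_gt (Set.ncard_sdiff_singleton_lt_of_mem hvw.snd_mem)

/-- Otherwise the common neighbour `c` can replace `u'` and `v'` in `V(M)`. -/
lemma exists_neighborSet_eq_pair (hM : IsTightMatching G M)
    (hδ : ∀ v, 2 ≤ (G.neighborSet v).ncard) {u' v' c : V} (huv : u ≠ v) (huc : G.Adj u c)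
    (hvc : G.Adj v c) (huu' : M.Adj u u') (hvv' : M.Adj v v') :
    ∃ x, G.neighborSet x = {u', v'} := by
  by_contra! hno
  have hu'v' : u' ≠ v' := fun h => huv (hM.1.1.eq_of_adj_right huu' (h ▸ hvv'))
  have hS : IsTotalDomSet G (insert c (M.verts \ {u', v'})) := by
    refine hM.isMaximalMatching.isTotalDomSet (Set.subset_insert _ _)
      (fun p q hpq hq => ⟨c, Set.mem_insert _ _, ?_⟩)
      fun p _ hp => absurd (neighborSet_eq_pair_of_subset (hδ p) hp hu'v') (hno p)
    rcases hq with rfl | rfl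
    · exact hM.1.1.eq_of_adj_right hpq huu' ▸ huc
    · exact hM.1.1.eq_of_adj_right hpq hvv' ▸ hvc
  exact (hM.ncard_verts_le _ hS).not_gt
    (ncard_insert_diff_pair_lt c huu'.snd_mem hvv'.snd_mem hu'v')

lemma matchingCond (hM : IsTightMatching G M) (hδ : ∀ v, 2 ≤ (G.neighborSet v).ncard) :
    MatchingCond G M :=
  ⟨fun _ _ _ hvw _ hu hvu => hM.eq_of_adj hδ hvw hu hvu,
    fun _ _ _ _ huv ⟨_, huc, hvc⟩ _ _ huu' hvv' =>
      hM.exists_neighborSet_eq_pair hδ huv huc hvc huu' hvv'⟩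

end IsTightMatching

/-- The shape of an edge `uv ∈ 𝓜(G)` whose end `v` is not covered by `M`
(see `IsInducedC6.matchedHexagon`); it forces `G ≅ C₆`. -/
structure MatchedHexagon (G : SimpleGraph V) (M : G.Subgraph) (x u v y w t : V) : Prop where
  pairwise_ne : [x, u, v, y, w, t].Pairwise (· ≠ ·)
  adj_uv : G.Adj u v
  adj_wt : G.Adj w t
  neighborSet_x : G.neighborSet x = {t, u}
  neighborSet_y : G.neighborSet y = {v, w}
  matched_xu : M.Adj x u
  matched_yw : M.Adj y w
  v_notMem : v ∉ M.verts
  t_notMem : t ∉ M.verts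

namespace MatchedHexagon

lemma rotate (h : MatchedHexagon G M x u v y w t) : MatchedHexagon G M y w t x u v :=
  ⟨h.pairwise_ne.perm (List.rotate_perm _ 3).symm (fun h => Ne.symm h), h.adj_wt, h.adj_uv,
    h.neighborSet_y, h.neighborSet_x, h.matched_yw, h.matched_xu, h.t_notMem, h.v_notMem⟩

lemma adj_tx (h : MatchedHexagon G M x u v y w t) : G.Adj t x := by
  have : t ∈ G.neighborSet x := h.neighborSet_x ▸ Set.mem_insert t {u}
  exact this.symm

variable [Finite V]

/-- Otherwise `v` could replace `x` and `w` in the total dominating set `V(M)`. -/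
lemma neighborSet_t (h : MatchedHexagon G M x u v y w t) (hM : IsTightMatching G M)
    (hδ : ∀ v, 2 ≤ (G.neighborSet v).ncard) : G.neighborSet t = {w, x} := by
  obtain ⟨⟨-, -, -, hxw, -⟩, -⟩ := pairwise_ne_six_iff.1 h.pairwise_ne
  refine (Set.insert_subset h.adj_wt.symm (Set.singleton_subset_iff.2 h.adj_tx)).antisymm' ?_
  intro c htc
  by_contra hc
  have hS : IsTotalDomSet G (insert v (M.verts \ {w, x})) := by
    refine hM.isMaximalMatching.isTotalDomSet (Set.subset_insert _ _)
      (fun p q hpq hq => ⟨v, Set.mem_insert _ _, ?_⟩) fun p hp hsub => ?_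
    · rcases hq with rfl | rfl
      · rw [hM.1.1.eq_of_adj_right hpq h.matched_yw]
        exact (show v ∈ G.neighborSet y from h.neighborSet_y ▸ Set.mem_insert _ _)
      · rw [hM.1.1.eq_of_adj_right hpq h.matched_xu.symm]
        exact h.adj_uv
    · have hpx : x ∈ G.neighborSet p :=
        neighborSet_eq_pair_of_subset (hδ p) hsub hxw.symm ▸ Set.mem_insert_of_mem _ rfl
      have hxp : p ∈ G.neighborSet x := G.adj_symm hpx
      rw [h.neighborSet_x] at hxp
      rcases hxp with rfl | rfl
      · exact absurd (hsub htc) hc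
      · exact absurd h.matched_xu.snd_mem hp
  exact (hM.ncard_verts_le _ hS).not_gt
    (ncard_insert_diff_pair_lt v h.matched_yw.snd_mem h.matched_xu.fst_mem hxw.symm)

/-- A further neighbour `z` of `u` is an uncovered common neighbour of `u` and some matched `c`;
by (ii) some vertex has neighbourhood `{x, M_p c}`, so it lies in `N(x) = {t, u}`, and
both choices clash with the hexagon. -/
lemma neighborSet_u (h : MatchedHexagon G M x u v y w t) (hM : IsTightMatching G M)
    (hδ : ∀ v, 2 ≤ (G.neighborSet v).ncard) : G.neighborSet u = {x, v} := by
  obtain ⟨⟨-, hxv, -, hxw, -⟩, -⟩ := pairwise_ne_six_iff.1 h.pairwise_ne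
  refine (Set.insert_subset h.matched_xu.adj_sub.symm
    (Set.singleton_subset_iff.2 h.adj_uv)).antisymm' fun z huz => ?_
  by_contra hz
  have hzM : z ∉ M.verts := fun hzM => hz (.inl (hM.eq_of_adj hδ h.matched_xu.symm hzM huz))
  obtain ⟨c, hzc, hcu⟩ := Set.exists_ne_of_one_lt_ncard (hδ z) u
  obtain ⟨c', hcc', -⟩ := hM.1.1 (hM.1.mem_verts_of_adj hzM hzc)
  obtain ⟨p, hp⟩ := hM.exists_neighborSet_eq_pair hδ hcu.symm huz (G.adj_symm hzc)
    h.matched_xu.symm hcc'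
  have hxp : p ∈ G.neighborSet x :=
    G.adj_symm (show x ∈ G.neighborSet p from hp ▸ Set.mem_insert _ _)
  rw [h.neighborSet_x] at hxp
  rcases hxp with rfl | rfl
  · have hw : w ∈ ({x, c'} : Set V) := hp ▸ h.adj_wt.symm
    rcases hw with rfl | rfl
    · exact hxw rfl
    · have hyz : z ∈ G.neighborSet y :=
        hM.1.1.eq_of_adj_right hcc' h.matched_yw ▸ G.adj_symm hzc
      rw [h.neighborSet_y] at hyz
      rcases hyz with rfl | rfl
      · exact hz (.inr rfl)
      · exact hzM h.matched_yw.snd_mem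
  · have hv : v ∈ ({x, c'} : Set V) := hp ▸ h.adj_uv
    rcases hv with rfl | rfl
    · exact hxv rfl
    · exact h.v_notMem hcc'.snd_mem

lemma isC6 (h : MatchedHexagon G M x u v y w t) (hM : IsTightMatching G M)
    (hδ : ∀ v, 2 ≤ (G.neighborSet v).ncard) (hconn : G.Connected) : IsC6 G := by
  have hN : ∀ i : Fin 6, G.neighborSet (![x, u, v, y, w, t] i) =
      {![x, u, v, y, w, t] (i - 1), ![x, u, v, y, w, t] (i + 1)} := by
    intro i
    fin_cases i
    exacts [h.neighborSet_x, h.neighborSet_u hM hδ, h.rotate.neighborSet_t hM hδ,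
      h.neighborSet_y, h.rotate.neighborSet_u hM hδ, h.neighborSet_t hM hδ]
  obtain ⟨e⟩ := hconn.preconnected.nonempty_iso_of_neighborSet_eq_image (H := cycleGraph 6)
    ((List.nodup_ofFn (f := ![x, u, v, y, w, t])).1 h.pairwise_ne) fun i => by
      rw [hN, cycleGraph_neighborSet, Set.image_pair]
  exact ⟨e.symm⟩

end MatchedHexagon

lemma IsInducedC6.reverse (h : IsInducedC6 G x u v y w t) : IsInducedC6 G y v u x t w := by
  obtain ⟨hne, hxu, huv, hvy, hyw, hwt, htx, nxv, nxy, nxw, nuy, nuw, nut, nvw, nvt, nyt⟩ := h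
  exact ⟨hne.perm ((List.rotate_perm _ 2).trans (List.reverse_perm _)).symm (fun h => Ne.symm h),
    hvy.symm, huv.symm, hxu.symm, htx.symm, hwt.symm, hyw.symm, (nuy ·.symm), (nxy ·.symm), nyt,
    (nxv ·.symm), nvt, nvw, nut, nuw, nxw⟩

lemma adj_of_neighborSet_eq_pair (hM : M.IsMatching) (hy : y ∈ M.verts)
    (hN : G.neighborSet y = {a, b}) (ha : a ∉ M.verts) : M.Adj y b := by
  obtain ⟨q, hyq, -⟩ := hM hy
  have hq : q ∈ G.neighborSet y := hyq.adj_sub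
  rw [hN] at hq
  rcases hq with rfl | rfl
  · exact absurd hyq.snd_mem ha
  · exact hyq

lemma IsInducedC6.matchedHexagon [Finite V] (h : IsInducedC6 G x u v y w t) (hx : x ∈ d2 G)
    (hy : y ∈ d2 G) (hM : IsTightMatching G M) (hδ : ∀ v, 2 ≤ (G.neighborSet v).ncard)
    (hv : v ∉ M.verts) : MatchedHexagon G M x u v y w t := by
  obtain ⟨hne, hxu, huv, hvy, hyw, hwt, htx, -⟩ := h
  obtain ⟨-, ⟨-, -, -, hut⟩, ⟨-, hvw, -⟩, ⟨-, hyt⟩, -⟩ := pairwise_ne_six_iff.1 hne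
  have hNx := neighborSet_eq_pair_of_mem_d2 hx htx.symm hxu hut.symm
  have hNy := neighborSet_eq_pair_of_mem_d2 hy hvy.symm hyw hvw
  have hyw' := adj_of_neighborSet_eq_pair hM.1.1 (hM.1.mem_verts_of_adj hv hvy) hNy hv
  have ht : t ∉ M.verts := fun ht => hyt (hM.eq_of_adj hδ hyw'.symm ht hwt).symm
  have hxu' := adj_of_neighborSet_eq_pair hM.1.1 (hM.1.mem_verts_of_adj ht htx) hNx ht
  exact ⟨hne, huv, hwt, hNx, hNy, hxu', hyw', hv, ht⟩

lemma IsTightMatching.mSet_subset_edgeSet [Finite V] (hM : IsTightMatching G M)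
    (hδ : ∀ v, 2 ≤ (G.neighborSet v).ncard) (hconn : G.Connected) (hC : ¬IsC6 G) :
    mSet G ⊆ M.edgeSet := by
  rintro _ ⟨u, v, x, y, w, t, rfl, ⟨-, hx⟩, ⟨-, hy⟩, h⟩
  have hcovered : ∀ {x u v y w t : V}, IsInducedC6 G x u v y w t → x ∈ d2 G → y ∈ d2 G →
      v ∈ M.verts := fun h hx hy => by
    by_contra hv
    exact hC ((h.matchedHexagon hx hy hM hδ hv).isC6 hM hδ hconn)
  obtain ⟨q, huq, -⟩ := hM.1.1 (hcovered h.reverse hy hx)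
  rw [Subgraph.mem_edgeSet, hM.eq_of_adj hδ huq (hcovered h hx hy) h.2.2.1]
  exact huq

lemma MatchingCond.notMem_verts (hcond : MatchingCond G M) (hM : M.IsMatching) {z p q : V}
    (hp : p ∈ M.verts) (hq : q ∈ M.verts) (hpq : p ≠ q) (hzp : G.Adj z p) (hzq : G.Adj z q) :
    z ∉ M.verts := fun hz => by
  obtain ⟨r, hzr, -⟩ := hM hz
  exact hpq ((hcond.1 z hz r hzr p hp hzp).trans (hcond.1 z hz r hzr q hq hzq).symm)

lemma mem_mSet_of_matchingCond (hM : IsMaximalMatching G M) (hcond : MatchingCond G M)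
    (huv : M.Adj u v) (hux : G.Adj u x) (hx : x ∉ M.verts) (hxa : G.Adj x a)
    (hau : a ≠ u) (hav : a ≠ v) : s(u, v) ∈ mSet G := by
  have ha := hM.mem_verts_of_adj hx hxa
  obtain ⟨a', haa', -⟩ := hM.1 ha
  have hu := huv.fst_mem
  have hv := huv.snd_mem
  have ha' := haa'.snd_mem
  have ha'u : a' ≠ u := fun h => hav (hM.1.eq_of_adj_left (h ▸ haa'.symm) huv)
  have ha'v : a' ≠ v := fun h => hau (hM.1.eq_of_adj_left (h ▸ haa'.symm) huv.symm)
  obtain ⟨z, hz⟩ := hcond.2 u a hu ha hau.symm ⟨x, hux, hxa.symm⟩ v a' huv haa'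
  have hzN : ∀ q, G.Adj z q ↔ q = v ∨ q = a' := fun q => by
    rw [← mem_neighborSet, hz]; rfl
  have hzM := hcond.notMem_verts hM.1 hv ha' ha'v.symm ((hzN v).2 (.inl rfl))
    ((hzN a').2 (.inr rfl))
  obtain ⟨z', hz'⟩ := hcond.2 v a' hv ha' ha'v.symm
    ⟨z, G.adj_symm ((hzN v).2 (.inl rfl)), G.adj_symm ((hzN a').2 (.inr rfl))⟩
    u a huv.symm haa'.symm
  have hz'N : ∀ q, G.Adj z' q ↔ q = u ∨ q = a := fun q => by
    rw [← mem_neighborSet, hz']; rfl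
  have hz'M := hcond.notMem_verts hM.1 hu ha hau.symm ((hz'N u).2 (.inl rfl))
    ((hz'N a).2 (.inr rfl))
  have hd2 : ∀ {p q r : V}, q ≠ r → G.neighborSet p = {q, r} → p ∈ d2 G := fun hqr h =>
    show (G.neighborSet _).ncard = 2 by rw [h, Set.ncard_pair hqr]
  have hnot : ∀ {p q r}, M.Adj p q → r ∈ M.verts → r ≠ q → ¬G.Adj p r :=
    fun hpq hr hrq hpr => hrq (hcond.1 _ hpq.fst_mem _ hpq _ hr hpr)
  have hua := hnot huv ha hav
  have hua' := hnot huv ha' ha'v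
  have hva := hnot huv.symm ha hau
  have hva' := hnot huv.symm ha' ha'u
  have hGuv := huv.adj_sub
  have hGaa' := haa'.adj_sub
  refine ⟨u, v, z', z, a', a, rfl, ⟨G.adj_symm ((hz'N u).2 (.inl rfl)), hd2 hau.symm hz'⟩,
    ⟨G.adj_symm ((hzN v).2 (.inl rfl)), hd2 ha'v.symm hz⟩, ?_⟩
  -- the hexagon is `z' u v z a' a`; its non-edges come from `N(z)`, `N(z')` and (i)
  rw [IsInducedC6, pairwise_ne_six_iff]
  grind [SimpleGraph.Adj.ne, G.adj_symm]

lemma kGraph_neighborSet_inl {n : ℕ} (i : Fin n) :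
    (kGraph n).neighborSet (.inl i) = Set.range Sum.inr := by
  ext (j | j) <;> simp [kGraph]

lemma kGraph_neighborSet_inr {n : ℕ} (j : Fin 2) :
    (kGraph n).neighborSet (.inr j) = insert (.inr (1 - j)) (Set.range Sum.inl) := by
  ext (i | i)
  · simp [kGraph]
  · fin_cases j <;> fin_cases i <;> simp [kGraph]

lemma inK_of_neighborSet_eq [Finite V] (hconn : G.Preconnected) {X : Set V}
    (hX : X.Nonempty) (hXN : ∀ x ∈ X, G.neighborSet x = {u, v})
    (hNu : G.neighborSet u = insert v X) (hNv : G.neighborSet v = insert u X) : InK G := by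
  have := hX.to_subtype
  obtain ⟨e⟩ : Nonempty (Fin (Nat.card X) ≃ X) := ⟨(Finite.equivFin X).symm⟩
  set f : Fin (Nat.card X) ⊕ Fin 2 → V := Sum.elim (fun i => (e i : V)) ![u, v]
  have hXu : ∀ x ∈ X, G.Adj u x := fun x hx =>
    show x ∈ G.neighborSet u from hNu ▸ Set.mem_insert_of_mem v hx
  have hXv : ∀ x ∈ X, G.Adj v x := fun x hx =>
    show x ∈ G.neighborSet v from hNv ▸ Set.mem_insert_of_mem u hx
  have huv : G.Adj u v := show v ∈ G.neighborSet u from hNu ▸ Set.mem_insert v X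
  have hf : Function.Injective f := by
    refine Function.Injective.sumElim (Subtype.val_injective.comp e.injective) ?_ ?_
    · intro j₁ j₂ h
      fin_cases j₁ <;> fin_cases j₂ <;> simp_all [huv.ne, huv.ne.symm]
    · intro i j
      fin_cases j
      · exact (hXu _ (e i).2).ne'
      · exact (hXv _ (e i).2).ne'
  have hN : ∀ a, G.neighborSet (f a) = f '' (kGraph (Nat.card X)).neighborSet a := by
    rintro (i | j)
    · rw [kGraph_neighborSet_inl, ← Set.range_comp]
      exact (hXN _ (e i).2).trans (Matrix.range_cons_cons_empty u v _).symm
    · have hfX : f '' Set.range Sum.inl = X := by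
        rw [← Set.range_comp]
        change Set.range (Subtype.val ∘ e) = X
        rw [Set.range_comp, e.range_eq_univ, Set.image_univ, Subtype.range_coe]
      rw [kGraph_neighborSet_inr, Set.image_insert_eq, hfX]
      fin_cases j
      exacts [hNu, hNv]
  obtain ⟨φ⟩ := hconn.nonempty_iso_of_neighborSet_eq_image hf hN
  exact ⟨_, Nat.card_pos, ⟨φ.symm⟩⟩

lemma inK_of_forall_neighborSet_subset [Finite V] (hδ : ∀ v, 2 ≤ (G.neighborSet v).ncard)
    (hconn : G.Connected) (huv : G.Adj u v)
    (hu : ∀ x, G.Adj u x → x ≠ v → G.neighborSet x ⊆ {u, v})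
    (hv : ∀ x, G.Adj v x → x ≠ u → G.neighborSet x ⊆ {u, v}) : InK G := by
  set X := G.neighborSet u \ {v}
  have hXN : ∀ x ∈ X, G.neighborSet x = {u, v} := fun x hx =>
    neighborSet_eq_pair_of_subset (hδ x) (hu x hx.1 hx.2) huv.ne
  refine inK_of_neighborSet_eq hconn.preconnected ?_ hXN ?_ ?_
  · obtain ⟨x, hx, hxv⟩ := Set.exists_ne_of_one_lt_ncard (hδ u) v
    exact ⟨x, hx, hxv⟩
  · rw [Set.insert_sdiff_singleton]
    exact (Set.insert_eq_of_mem (show v ∈ G.neighborSet u from huv)).symm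
  · ext y
    refine ⟨fun hvy => ?_, ?_⟩
    · by_cases hyu : y = u
      · exact .inl hyu
      · have hyN := neighborSet_eq_pair_of_subset (hδ y) (hv y hvy hyu) huv.ne
        exact .inr ⟨G.adj_symm (show u ∈ G.neighborSet y from hyN ▸ Set.mem_insert u {v}),
          (G.ne_of_adj hvy).symm⟩
    · rintro (rfl | hy)
      · exact huv.symm
      · exact G.adj_symm (show v ∈ G.neighborSet y from hXN y hy ▸ Set.mem_insert_of_mem _ rfl)

lemma IsMaximalMatching.edgeSet_subset_mSet [Finite V] (hM : IsMaximalMatching G M)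
    (hcond : MatchingCond G M) (hδ : ∀ v, 2 ≤ (G.neighborSet v).ncard) (hconn : G.Connected)
    (hK : ¬InK G) : M.edgeSet ⊆ mSet G := by
  have key : ∀ {u v}, M.Adj u v → s(u, v) ∉ mSet G →
      ∀ x, G.Adj u x → x ≠ v → G.neighborSet x ⊆ {u, v} := by
    intro u v huv hnot x hux hxv a hxa
    have hx : x ∉ M.verts := fun hx => hxv (hcond.1 u huv.fst_mem v huv x hx hux)
    by_contra ha
    simp only [Set.mem_insert_iff, Set.mem_singleton_iff, not_or] at ha
    exact hnot (mem_mSet_of_matchingCond hM hcond huv hux hx hxa ha.1 ha.2)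
  intro e
  induction e using Sym2.ind with | _ u v => ?_
  intro huv
  rw [Subgraph.mem_edgeSet] at huv
  by_contra hnot
  refine hK (inK_of_forall_neighborSet_subset hδ hconn huv.adj_sub (key huv hnot) ?_)
  rw [Sym2.eq_swap] at hnot
  simpa only [Set.pair_comm] using key huv.symm hnot

/-- Let `G` be a finite connected graph with `δ(G) = 2` and `γ_t(G) = 2 μ*(G)` which is
neither in `𝒦` nor a 6-cycle. Then `𝓜(G)` is a maximal matching satisfying conditions
(i) and (ii), and it is the unique maximal matching satisfying them. -/
theorem statement14 [Fintype V] (G : SimpleGraph V)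
    (hconn : G.Connected) (h2 : minDeg G = 2)
    (heq : gammaT G = 2 * muStar G) (hK : ¬InK G) (hC : ¬IsC6 G) :
    ∃ M : G.Subgraph, M.edgeSet = mSet G ∧ IsMaximalMatching G M ∧ MatchingCond G M ∧
      ∀ M' : G.Subgraph, IsMaximalMatching G M' → MatchingCond G M' →
        M'.edgeSet = mSet G := by
  have hδ : ∀ v, 2 ≤ (G.neighborSet v).ncard := fun v => h2 ▸ minDeg_le_ncard_neighborSet v
  obtain ⟨M, hM, hmu⟩ := exists_isMaximalMatching_ncard_eq_muStar G
  have hT := isTightMatching_of_gammaT_eq heq hM hmu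
  have hcond := hT.matchingCond hδ
  have hEq : M.edgeSet = mSet G :=
    (hM.edgeSet_subset_mSet hcond hδ hconn hK).antisymm (hT.mSet_subset_edgeSet hδ hconn hC)
  refine ⟨M, hEq, hM, hcond, fun M' hM' hcond' => ?_⟩
  rw [← hEq]
  exact hM'.2 M hM.1 (hEq ▸ hM'.edgeSet_subset_mSet hcond' hδ hconn hK)

end TotalDomMM
end

section
/- Let G be a finite simple graph with minimum degree δ(G) = 2 satisfying γ_t(G) = 2μ*(G). Then the girth of G is at most 6. -/
open SimpleGraph

namespace TotalDomMM

variable {V : Type*}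

section AuxProof

open SimpleGraph.Subgraph

variable {G : SimpleGraph V}

private lemma egirth_le_len {a : V} (w : G.Walk a a) (hw : w.IsCycle) :
    G.egirth ≤ w.length := by
  rw [SimpleGraph.egirth]
  exact iInf_le_of_le a (iInf_le_of_le w (iInf_le _ hw))

private lemma egirth_le_tri {a b c : V} (hab : G.Adj a b) (hbc : G.Adj b c)
    (hca : G.Adj c a) : G.egirth ≤ 6 := by
  have hc : (Walk.cons hab (Walk.cons hbc (Walk.cons hca Walk.nil))).IsCycle := by
    simp [Walk.isCycle_def, Walk.isTrail_def, hab.ne, hbc.ne, hca.ne, hca.ne',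
      Sym2.eq_iff, hab.ne', hbc.ne']
  calc G.egirth ≤ ((Walk.cons hab (Walk.cons hbc (Walk.cons hca Walk.nil))).length : ℕ∞) :=
        egirth_le_len _ hc
    _ ≤ 6 := by norm_num

private lemma egirth_le_hex {a b c d e f : V} (h1 : G.Adj a b) (h2 : G.Adj b c)
    (h3 : G.Adj c d) (h4 : G.Adj d e) (h5 : G.Adj e f) (h6 : G.Adj f a)
    (hac : a ≠ c) (had : a ≠ d) (hae : a ≠ e)
    (hbd : b ≠ d) (hbe : b ≠ e) (hbf : b ≠ f)
    (hce : c ≠ e) (hcf : c ≠ f) (hdf : d ≠ f) : G.egirth ≤ 6 := by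
  have hc : (Walk.cons h1 (Walk.cons h2 (Walk.cons h3 (Walk.cons h4 (Walk.cons h5
      (Walk.cons h6 Walk.nil)))))).IsCycle := by
    simp [Walk.isCycle_def, Walk.isTrail_def, Sym2.eq_iff,
      h1.ne, h2.ne, h3.ne, h4.ne, h5.ne, h6.ne, h1.ne', h2.ne', h3.ne', h4.ne', h5.ne', h6.ne',
      hac, had, hae, hbd, hbe, hbf, hce, hcf, hdf,
      hac.symm, had.symm, hae.symm, hbd.symm, hbe.symm, hbf.symm, hce.symm, hcf.symm, hdf.symm]
  calc G.egirth ≤ ((Walk.cons h1 (Walk.cons h2 (Walk.cons h3 (Walk.cons h4 (Walk.cons h5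
      (Walk.cons h6 Walk.nil)))))).length : ℕ∞) := egirth_le_len _ hc
    _ ≤ 6 := by norm_num

private lemma exists_maximal_matching [Fintype V] (G : SimpleGraph V) :
    ∃ M : G.Subgraph, IsMaximalMatching G M := by
  classical
  set T := {n | ∃ M : G.Subgraph, M.IsMatching ∧ M.edgeSet.ncard = n} with hT
  have hne : T.Nonempty := ⟨0, ⊥, fun v hv => absurd hv (by simp), by simp⟩
  have hbdd : BddAbove T := by
    refine ⟨(Set.univ : Set (Sym2 V)).ncard, fun n hn => ?_⟩
    obtain ⟨M, -, rfl⟩ := hn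
    exact Set.ncard_le_ncard (Set.subset_univ _) Set.finite_univ
  obtain ⟨M, hM, hMcard⟩ := Nat.sSup_mem hne hbdd
  refine ⟨M, hM, fun M' hM' hsub => ?_⟩
  refine Set.eq_of_subset_of_ncard_le hsub ?_ (Set.toFinite _)
  rw [hMcard]
  exact le_csSup hbdd ⟨M', hM', rfl⟩

private lemma verts_ncard_le [Fintype V] {M : G.Subgraph} (hM : M.IsMatching) :
    M.verts.ncard ≤ 2 * M.edgeSet.ncard := by
  classical
  have hmem : ∀ (v : V) (h : v ∈ M.verts), v ∈ (hM.toEdge ⟨v, h⟩ : Sym2 V) := by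
    intro v h
    exact Sym2.mem_mk_left _ _
  set f : V → Sym2 V × Bool := fun v =>
    if h : v ∈ M.verts then ((hM.toEdge ⟨v, h⟩ : Sym2 V),
      decide (v = (hM.toEdge ⟨v, h⟩ : Sym2 V).out.1)) else (s(v, v), true) with hf
  have hmaps : ∀ v ∈ M.verts, f v ∈ M.edgeSet ×ˢ (Set.univ : Set Bool) := by
    intro v h
    simp only [hf, dif_pos h]
    exact ⟨(hM.toEdge ⟨v, h⟩).2, trivial⟩
  have hinj : Set.InjOn f M.verts := by
    intro v hv w hw hvw
    simp only [hf, dif_pos hv, dif_pos hw, Prod.mk.injEq] at hvw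
    obtain ⟨h1, h2⟩ := hvw
    by_contra hne
    have hvmem : v ∈ (hM.toEdge ⟨w, hw⟩ : Sym2 V) := h1 ▸ hmem v hv
    have hwmem : w ∈ (hM.toEdge ⟨w, hw⟩ : Sym2 V) := hmem w hw
    have heq : (hM.toEdge ⟨w, hw⟩ : Sym2 V) = s(v, w) :=
      (Sym2.mem_and_mem_iff hne).mp ⟨hvmem, hwmem⟩
    have hout := Sym2.out_fst_mem (hM.toEdge ⟨w, hw⟩ : Sym2 V)
    rw [heq, Sym2.mem_iff] at hout
    rw [h1, heq] at h2
    rcases hout with h | h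
    · rw [h] at h2
      simp at h2
      exact hne h2.symm
    · rw [h] at h2
      simp at h2
      exact hne h2
  have hcard : (M.edgeSet ×ˢ (Set.univ : Set Bool)).ncard = 2 * M.edgeSet.ncard := by
    rw [← Nat.card_coe_set_eq, Nat.card_congr (Equiv.Set.prod _ _), Nat.card_prod,
      Nat.card_coe_set_eq, Nat.card_coe_set_eq, Set.ncard_univ]
    simp [Nat.card_eq_fintype_card, mul_comm]
  calc M.verts.ncard ≤ (M.edgeSet ×ˢ (Set.univ : Set Bool)).ncard :=
        Set.ncard_le_ncard_of_injOn f hmaps hinj (Set.toFinite _)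
    _ = 2 * M.edgeSet.ncard := hcard

end AuxProof

/-- If `G` is a finite graph with `δ(G) = 2` and `γ_t(G) = 2 μ*(G)`, then the girth of
`G` is at most 6. -/
theorem statement16 [Fintype V] (G : SimpleGraph V)
    (h2 : minDeg G = 2) (heq : gammaT G = 2 * muStar G) :
    G.egirth ≤ 6 := by
  classical
  have h2' : sInf {k | ∃ v : V, (G.neighborSet v).ncard = k} = 2 := h2
  have hdeg : ∀ v : V, 1 < (G.neighborSet v).ncard := by
    intro v
    have hmem : (G.neighborSet v).ncard ∈ {k | ∃ v : V, (G.neighborSet v).ncard = k} :=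
      ⟨v, rfl⟩
    have h := Nat.sInf_le hmem
    omega
  have hnbr : ∀ v w : V, ∃ a, G.Adj v a ∧ a ≠ w := by
    intro v w
    obtain ⟨a, ha, hne⟩ := Set.exists_ne_of_one_lt_ncard (hdeg v) w
    exact ⟨a, ha, hne⟩
  -- a minimum maximal matching
  have hTne : {n | ∃ M : G.Subgraph, IsMaximalMatching G M ∧ M.edgeSet.ncard = n}.Nonempty := by
    obtain ⟨M, hMM⟩ := exists_maximal_matching G
    exact ⟨_, M, hMM, rfl⟩
  obtain ⟨M, hMM, hMcard⟩ := Nat.sInf_mem hTne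
  obtain ⟨hM, hMmax⟩ := hMM
  set k := M.edgeSet.ncard with hk
  have hγ : gammaT G = 2 * k := by rw [heq, muStar, ← hMcard]
  have hγle : ∀ S : Set V, IsTotalDomSet G S → 2 * k ≤ S.ncard := by
    intro S hS
    rw [← hγ]
    exact Nat.sInf_le ⟨S, hS, rfl⟩
  -- every neighbor of an unmatched vertex is matched
  have hstar : ∀ a b : V, a ∉ M.verts → G.Adj a b → b ∈ M.verts := by
    intro a b ha hab
    by_contra hb
    have hd : Disjoint M.support (G.subgraphOfAdj hab).support := by
      rw [Set.disjoint_left]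
      intro x hx hx'
      have hx1 : x ∈ M.verts := M.support_subset_verts hx
      have hx2 : x ∈ ({a, b} : Set V) := by
        simpa using (G.subgraphOfAdj hab).support_subset_verts hx'
      rcases hx2 with rfl | rfl
      exacts [ha hx1, hb hx1]
    have hM' : (M ⊔ G.subgraphOfAdj hab).IsMatching :=
      hM.sup (Subgraph.IsMatching.subgraphOfAdj hab) hd
    have hsub : M.edgeSet ⊆ (M ⊔ G.subgraphOfAdj hab).edgeSet :=
      Subgraph.edgeSet_mono le_sup_left
    have hmem : s(a, b) ∈ M.edgeSet := by
      rw [hMmax _ hM' hsub, Subgraph.mem_edgeSet]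
      exact Subgraph.sup_adj.mpr (Or.inr (by simp))
    exact ha (M.edge_vert (Subgraph.mem_edgeSet.mp hmem))
  -- uniqueness of partners
  have huniq : ∀ a b c : V, M.Adj a b → M.Adj a c → b = c := by
    intro a b c hab hac
    obtain ⟨w, hw, hwu⟩ := hM (M.edge_vert hab)
    rw [hwu b hab, hwu c hac]
  have hpartner : ∀ a ∈ M.verts, ∃ b, M.Adj a b :=
    fun a ha => ⟨(hM ha).choose, (hM ha).choose_spec.1⟩
  -- there is an edge of M
  have hV : Nonempty V := by
    by_contra h
    rw [not_nonempty_iff] at h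
    have hempty : {k | ∃ v : V, (G.neighborSet v).ncard = k} = ∅ := by
      ext n
      simp only [Set.mem_setOf_eq, Set.mem_empty_iff_false, iff_false]
      rintro ⟨v, -⟩
      exact h.elim v
    rw [minDeg, hempty, Nat.sInf_empty] at h2
    exact (by norm_num : (0 : ℕ) ≠ 2) h2
  obtain ⟨v₀⟩ := hV
  obtain ⟨u, v, hMuv⟩ : ∃ u v, M.Adj u v := by
    obtain ⟨a, ha, -⟩ := hnbr v₀ v₀
    by_cases h : v₀ ∈ M.verts
    · obtain ⟨b, hb⟩ := hpartner v₀ h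
      exact ⟨v₀, b, hb⟩
    · obtain ⟨b, hb⟩ := hpartner a (hstar v₀ a h ha)
      exact ⟨a, b, hb⟩
  have huv : G.Adj u v := M.adj_sub hMuv
  have huM : u ∈ M.verts := M.edge_vert hMuv
  have hvM : v ∈ M.verts := M.edge_vert hMuv.symm
  have hk1 : 1 ≤ k := by
    have hne : M.edgeSet.Nonempty := ⟨s(u, v), hMuv⟩
    have hp := (Set.ncard_pos (Set.toFinite M.edgeSet)).mpr hne
    omega
  have hverts2k : M.verts.ncard ≤ 2 * k := verts_ncard_le hM
  -- pick the second neighbor x of u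
  obtain ⟨x, hux, hxv⟩ := hnbr u v
  have hxM : x ∉ M.verts := by
    intro hxM
    have hTDS : IsTotalDomSet G (M.verts \ {v}) := by
      intro q
      by_cases hq : q ∈ M.verts
      · obtain ⟨q', hq'⟩ := hpartner q hq
        by_cases hq'v : q' = v
        · have hqu : q = u := huniq v q u (hq'v ▸ hq'.symm) hMuv.symm
          subst hqu
          exact ⟨x, ⟨hxM, hxv⟩, hux⟩
        · exact ⟨q', ⟨M.edge_vert hq'.symm, hq'v⟩, M.adj_sub hq'⟩
      · obtain ⟨a, ha, hav⟩ := hnbr q v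
        exact ⟨a, ⟨hstar q a hq ha, hav⟩, ha⟩
    have h1 := hγle _ hTDS
    have h2' : (M.verts \ {v}).ncard + 1 = M.verts.ncard :=
      Set.ncard_diff_singleton_add_one hvM (Set.toFinite _)
    omega
  -- pick the second neighbor w of x; all neighbors of x are matched
  obtain ⟨w, hxw, hwu⟩ := hnbr x u
  have hwM : w ∈ M.verts := hstar x w hxM hxw
  by_cases hwv : w = v
  · -- triangle u v x
    subst hwv
    exact egirth_le_tri huv hxw.symm hux.symm
  -- w has a partner w'
  obtain ⟨w', hMww'⟩ := hpartner w hwM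
  have hww' : G.Adj w w' := M.adj_sub hMww'
  have hw'M : w' ∈ M.verts := M.edge_vert hMww'.symm
  have hw'v : w' ≠ v := by
    intro h
    exact hwu (huniq v w u (h ▸ hMww'.symm : M.Adj v w) hMuv.symm)
  have hw'u : w' ≠ u := by
    intro h
    exact hwv (huniq u w v (h ▸ hMww'.symm : M.Adj u w) hMuv)
  set S₂ := (M.verts \ {v, w'}) ∪ {x} with hS₂
  have hc1 : (M.verts \ {v, w'}).ncard + 1 = (M.verts \ {v}).ncard := by
    have hEq : M.verts \ {v, w'} = (M.verts \ {v}) \ {w'} := by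
      rw [Set.diff_diff, Set.singleton_union]
    rw [hEq]
    exact Set.ncard_diff_singleton_add_one ⟨hw'M, hw'v⟩ (Set.toFinite _)
  have hc2 : (M.verts \ {v}).ncard + 1 = M.verts.ncard :=
    Set.ncard_diff_singleton_add_one hvM (Set.toFinite _)
  have hc3 : S₂.ncard ≤ (M.verts \ {v, w'}).ncard + 1 := by
    calc S₂.ncard ≤ (M.verts \ {v, w'}).ncard + ({x} : Set V).ncard :=
          Set.ncard_union_le _ _
      _ = (M.verts \ {v, w'}).ncard + 1 := by rw [Set.ncard_singleton]
  have hnot : ¬ IsTotalDomSet G S₂ := by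
    intro h
    have := hγle S₂ h
    omega
  have hzex : ∃ z, ∀ s ∈ S₂, ¬ G.Adj z s := by
    simp only [IsTotalDomSet, not_forall] at hnot
    obtain ⟨z, hz⟩ := hnot
    push_neg at hz
    exact ⟨z, hz⟩
  obtain ⟨z, hz⟩ := hzex
  have hxS : x ∈ S₂ := Or.inr rfl
  have huS : u ∈ S₂ := Or.inl ⟨huM, by simp [huv.ne, hw'u.symm]⟩
  have hwS : w ∈ S₂ := Or.inl ⟨hwM, by simp [hwv, hww'.ne]⟩
  have hzx : ¬ G.Adj z x := hz x hxS
  have hzu : ¬ G.Adj z u := hz u huS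
  have hzw : ¬ G.Adj z w := hz w hwS
  have hzM : z ∉ M.verts := by
    intro hzM
    obtain ⟨z', hMzz'⟩ := hpartner z hzM
    have hz'M : z' ∈ M.verts := M.edge_vert hMzz'.symm
    by_cases h1 : z' = v
    · have hzu' : z = u := huniq v z u (h1 ▸ hMzz'.symm) hMuv.symm
      exact hzx (hzu' ▸ hux)
    · by_cases h2 : z' = w'
      · have hzw2 : z = w := huniq w' z w (h2 ▸ hMzz'.symm) hMww'.symm
        exact hzx (hzw2 ▸ hxw.symm)
      · exact hz z' (Or.inl ⟨hz'M, by simp [h1, h2]⟩) (M.adj_sub hMzz')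
  have key : ∀ c, G.Adj z c → c = v ∨ c = w' := by
    intro c hc
    have hcM : c ∈ M.verts := hstar z c hzM hc
    by_contra hcc
    push_neg at hcc
    exact hz c (Or.inl ⟨hcM, by simp [hcc.1, hcc.2]⟩) hc
  have hzvw' : G.Adj z v ∧ G.Adj z w' := by
    obtain ⟨a, b, haz, hbz, hab⟩ := (Set.one_lt_ncard_iff (Set.toFinite _)).mp (hdeg z)
    have haz' : G.Adj z a := haz
    have hbz' : G.Adj z b := hbz
    rcases key a haz' with rfl | rfl <;> rcases key b hbz' with rfl | rfl
    · exact absurd rfl hab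
    · exact ⟨haz', hbz'⟩
    · exact ⟨hbz', haz'⟩
    · exact absurd rfl hab
  obtain ⟨hzv, hzw'⟩ := hzvw'
  -- hexagon z v u x w w'
  refine egirth_le_hex hzv huv.symm hux hxw hww' hzw'.symm ?_ ?_ ?_ ?_ ?_ ?_ ?_ ?_ ?_
  · exact fun h => hzx (show G.Adj z x by rw [h]; exact hux)
  · exact fun h => hzu (show G.Adj z u by rw [h]; exact hux.symm)
  · exact fun h => hzx (show G.Adj z x by rw [h]; exact hxw.symm)
  · exact fun h => hxM (show x ∈ M.verts by rw [← h]; exact hvM)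
  · exact fun h => hwv h.symm
  · exact fun h => hw'v h.symm
  · exact fun h => hwu h.symm
  · exact fun h => hw'u h.symm
  · exact fun h => hxM (show x ∈ M.verts by rw [h]; exact hw'M)


end TotalDomMM
end
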